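/- arXiv:2208.01790 — 4 statements merged into one kernel-verified Lean document; each statement's English description precedes it below -/
import Mathlib

section
/- Let (X,Y) be a random point in R^2 with continuous joint cdf F_θ and continuous marginals G and H not depending on θ, and suppose F_0(x,y) = G(x)H(y). Let (X_0,Y_0) and (X_θ,Y_θ) be independent random points with cdf's F_0 and F_θ respectively. Then E[F_0(X_θ, Y_θ)] = E[F_θ(X_0, Y_0)]; that is, the expectation of F_0 under μ_θ equals the expectation of F_θ under μ_0. -/
open MeasureTheory

/-- The bivariate cdf of a probability measure on `ℝ²`. -/
noncomputable def jointCDF (μ : Measure (ℝ × ℝ)) (p : ℝ × ℝ) : ℝ :=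
  (μ (Set.Iic p.1 ×ˢ Set.Iic p.2)).toReal

section Aux

open Set Filter Topology

/-- If the first-marginal cdf is continuous, vertical lines are null. -/
lemma line_null_fst (μ : Measure (ℝ × ℝ)) [IsProbabilityMeasure μ] (G : ℝ → ℝ)
    (hGc : Continuous G) (hG : ∀ x : ℝ, (μ (Set.Iic x ×ˢ (Set.univ : Set ℝ))).toReal = G x)
    (x : ℝ) : μ ({x} ×ˢ (Set.univ : Set ℝ)) = 0 := by
  have hfin : ∀ s : Set (ℝ × ℝ), μ s ≠ ⊤ := fun s => measure_ne_top μ s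
  have key : ∀ x' < x, (μ ({x} ×ˢ (Set.univ : Set ℝ))).toReal ≤ G x - G x' := by
    intro x' hx'
    have hsub : {x} ×ˢ (Set.univ : Set ℝ) ⊆ (Set.Iic x ×ˢ (Set.univ : Set ℝ)) \ (Set.Iic x' ×ˢ (Set.univ : Set ℝ)) := by
      rintro ⟨a, b⟩ ⟨ha, -⟩
      simp only [Set.mem_singleton_iff] at ha
      refine ⟨⟨?_, trivial⟩, ?_⟩
      · exact le_of_eq ha
      · rintro ⟨h1, -⟩
        rw [Set.mem_Iic] at h1
        rw [ha] at h1
        exact absurd hx' (not_lt.mpr h1)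
    have h1 : μ ({x} ×ˢ (Set.univ : Set ℝ)) ≤
        μ ((Set.Iic x ×ˢ (Set.univ : Set ℝ)) \ (Set.Iic x' ×ˢ (Set.univ : Set ℝ))) :=
      measure_mono hsub
    have h2 : μ ((Set.Iic x ×ˢ (Set.univ : Set ℝ)) \ (Set.Iic x' ×ˢ (Set.univ : Set ℝ))) =
        μ (Set.Iic x ×ˢ (Set.univ : Set ℝ)) - μ (Set.Iic x' ×ˢ (Set.univ : Set ℝ)) := by
      apply measure_diff
      · exact Set.prod_mono (Set.Iic_subset_Iic.mpr hx'.le) le_rfl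
      · exact (measurableSet_Iic.prod MeasurableSet.univ).nullMeasurableSet
      · exact hfin _
    calc (μ ({x} ×ˢ (Set.univ : Set ℝ))).toReal
        ≤ (μ (Set.Iic x ×ˢ (Set.univ : Set ℝ)) - μ (Set.Iic x' ×ˢ (Set.univ : Set ℝ))).toReal :=
          ENNReal.toReal_mono (ENNReal.sub_ne_top (hfin _)) (h2 ▸ h1)
      _ = G x - G x' := by
          rw [ENNReal.toReal_sub_of_le (measure_mono (Set.prod_mono (Set.Iic_subset_Iic.mpr hx'.le) le_rfl)) (hfin _), hG, hG]
  have hle : (μ ({x} ×ˢ (Set.univ : Set ℝ))).toReal ≤ 0 := by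
    have htend : Tendsto (fun x' => G x - G x') (𝓝[<] x) (𝓝 (G x - G x)) :=
      (tendsto_const_nhds.sub ((hGc.tendsto x).mono_left nhdsWithin_le_nhds))
    rw [sub_self] at htend
    refine ge_of_tendsto htend ?_
    filter_upwards [self_mem_nhdsWithin] with x' hx' using key x' hx'
  have h0 : (μ ({x} ×ˢ (Set.univ : Set ℝ))).toReal = 0 :=
    le_antisymm hle ENNReal.toReal_nonneg
  exact (ENNReal.toReal_eq_zero_iff _).mp h0 |>.resolve_right (hfin _)

/-- If the second-marginal cdf is continuous, horizontal lines are null. -/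
lemma line_null_snd (μ : Measure (ℝ × ℝ)) [IsProbabilityMeasure μ] (H : ℝ → ℝ)
    (hHc : Continuous H) (hH : ∀ y : ℝ, (μ ((Set.univ : Set ℝ) ×ˢ Set.Iic y)).toReal = H y)
    (y : ℝ) : μ ((Set.univ : Set ℝ) ×ˢ {y}) = 0 := by
  have : μ ((Set.univ : Set ℝ) ×ˢ {y}) = (μ.map Prod.swap) ({y} ×ˢ (Set.univ : Set ℝ)) := by
    rw [Measure.map_apply measurable_swap
      ((measurableSet_singleton y).prod MeasurableSet.univ)]
    congr 1
    ext ⟨a, b⟩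
    simp [Set.mem_prod, And.comm]
  rw [this]
  have : IsProbabilityMeasure (μ.map Prod.swap) := Measure.isProbabilityMeasure_map measurable_swap.aemeasurable
  refine line_null_fst (μ.map Prod.swap) H hHc (fun x => ?_) y
  rw [Measure.map_apply measurable_swap (measurableSet_Iic.prod MeasurableSet.univ)]
  rw [← hH x]
  congr 2
  ext ⟨a, b⟩
  simp [Set.mem_prod, And.comm]

/-- Replace closed-corner cdf sets by open-corner sets, given null lines. -/
lemma Iic_eq_Iio (μ : Measure (ℝ × ℝ))
    (hx : ∀ x : ℝ, μ ({x} ×ˢ (Set.univ : Set ℝ)) = 0)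
    (hy : ∀ y : ℝ, μ ((Set.univ : Set ℝ) ×ˢ {y}) = 0)
    (x y : ℝ) : μ (Set.Iic x ×ˢ Set.Iic y) = μ (Set.Iio x ×ˢ Set.Iio y) := by
  apply le_antisymm
  · have hsub : Set.Iic x ×ˢ Set.Iic y ⊆
        (Set.Iio x ×ˢ Set.Iio y) ∪ (({x} ×ˢ (Set.univ : Set ℝ)) ∪ ((Set.univ : Set ℝ) ×ˢ {y})) := by
      rintro ⟨a, b⟩ ⟨ha, hb⟩
      rw [Set.mem_Iic] at ha hb
      rcases lt_or_eq_of_le ha with ha' | ha'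
      · rcases lt_or_eq_of_le hb with hb' | hb'
        · exact Or.inl ⟨ha', hb'⟩
        · exact Or.inr (Or.inr ⟨trivial, hb'⟩)
      · exact Or.inr (Or.inl ⟨ha', trivial⟩)
    calc μ (Set.Iic x ×ˢ Set.Iic y) ≤ _ := measure_mono hsub
      _ ≤ μ (Set.Iio x ×ˢ Set.Iio y) + μ (({x} ×ˢ (Set.univ : Set ℝ)) ∪ ((Set.univ : Set ℝ) ×ˢ {y})) :=
        measure_union_le _ _
      _ ≤ μ (Set.Iio x ×ˢ Set.Iio y) + (μ ({x} ×ˢ (Set.univ : Set ℝ)) + μ ((Set.univ : Set ℝ) ×ˢ {y})) :=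
        add_le_add le_rfl (measure_union_le _ _)
      _ = μ (Set.Iio x ×ˢ Set.Iio y) := by rw [hx, hy]; simp
  · exact measure_mono (Set.prod_mono Set.Iio_subset_Iic_self Set.Iio_subset_Iic_self)

/-- Inclusion–exclusion: measure of open upper quadrant. -/
lemma quadrant_toReal (μ : Measure (ℝ × ℝ)) [IsProbabilityMeasure μ] (G H F : ℝ → ℝ) (Fμ : ℝ × ℝ → ℝ)
    (hG : ∀ x : ℝ, (μ (Set.Iic x ×ˢ (Set.univ : Set ℝ))).toReal = G x)
    (hH : ∀ y : ℝ, (μ ((Set.univ : Set ℝ) ×ˢ Set.Iic y)).toReal = H y)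
    (hF : ∀ p : ℝ × ℝ, Fμ p = (μ (Set.Iic p.1 ×ˢ Set.Iic p.2)).toReal)
    (x y : ℝ) :
    (μ (Set.Ioi x ×ˢ Set.Ioi y)).toReal = 1 - G x - H y + Fμ (x, y) := by
  have hfin : ∀ s : Set (ℝ × ℝ), μ s ≠ ⊤ := fun s => measure_ne_top μ s
  set A := Set.Iic x ×ˢ (Set.univ : Set ℝ)
  set B := (Set.univ : Set ℝ) ×ˢ Set.Iic y
  have hcompl : (A ∪ B)ᶜ = Set.Ioi x ×ˢ Set.Ioi y := by
    ext ⟨a, b⟩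
    simp only [A, B, Set.mem_compl_iff, Set.mem_union, Set.mem_prod, Set.mem_Iic, Set.mem_univ,
      Set.mem_Ioi, and_true, true_and, not_or, not_le]
  have hinter : A ∩ B = Set.Iic x ×ˢ Set.Iic y := by
    ext ⟨a, b⟩
    simp only [A, B, Set.mem_inter_iff, Set.mem_prod, Set.mem_Iic, Set.mem_univ, and_true, true_and]
  have hABm : MeasurableSet (A ∪ B) :=
    (measurableSet_Iic.prod MeasurableSet.univ).union (MeasurableSet.univ.prod measurableSet_Iic)
  have hunion : μ (A ∪ B) + μ (A ∩ B) = μ A + μ B :=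
    measure_union_add_inter A (MeasurableSet.univ.prod measurableSet_Iic)
  have hunion' : (μ (A ∪ B)).toReal + Fμ (x, y) = G x + H y := by
    have h' : (μ (A ∪ B)).toReal + (μ (A ∩ B)).toReal = (μ A).toReal + (μ B).toReal := by
      rw [← ENNReal.toReal_add (hfin _) (hfin _), ← ENNReal.toReal_add (hfin _) (hfin _), hunion]
    have hi : (μ (A ∩ B)).toReal = Fμ (x, y) := by rw [hinter, hF (x, y)]
    have ha : (μ A).toReal = G x := hG x
    have hb : (μ B).toReal = H y := hH y
    linarith [h']
  have hcomp : μ ((A ∪ B)ᶜ) = 1 - μ (A ∪ B) := prob_compl_eq_one_sub hABm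
  have hle1 : μ (A ∪ B) ≤ 1 := prob_le_one
  have : (μ ((A ∪ B)ᶜ)).toReal = 1 - (μ (A ∪ B)).toReal := by
    rw [hcomp, ENNReal.toReal_sub_of_le hle1 ENNReal.one_ne_top, ENNReal.toReal_one]
  rw [← hcompl, this]
  linarith [hunion']

/-- Fubini step: exchanging open lower / upper quadrants. -/
lemma fubini_step (μ ν : Measure (ℝ × ℝ)) [IsProbabilityMeasure μ] [IsProbabilityMeasure ν] :
    ∫ p, (ν (Set.Iio p.1 ×ˢ Set.Iio p.2)).toReal ∂μ
      = ∫ q, (μ (Set.Ioi q.1 ×ˢ Set.Ioi q.2)).toReal ∂ν := by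
  set S : Set ((ℝ × ℝ) × (ℝ × ℝ)) := {r | r.2.1 < r.1.1 ∧ r.2.2 < r.1.2}
  have hS : MeasurableSet S :=
    (measurableSet_lt (measurable_snd.fst) (measurable_fst.fst)).inter
      (measurableSet_lt (measurable_snd.snd) (measurable_fst.snd))
  have h1 : ∀ p : ℝ × ℝ, Prod.mk p ⁻¹' S = Set.Iio p.1 ×ˢ Set.Iio p.2 := by
    intro p; ext q; simp [S, Set.mem_prod, And.comm]
  have h2 : ∀ q : ℝ × ℝ, (fun p => (p, q)) ⁻¹' S = Set.Ioi q.1 ×ˢ Set.Ioi q.2 := by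
    intro q; ext p; simp [S, Set.mem_prod]
  have hl : ∫ p, (ν (Set.Iio p.1 ×ˢ Set.Iio p.2)).toReal ∂μ
      = (∫⁻ p, ν (Prod.mk p ⁻¹' S) ∂μ).toReal := by
    rw [← integral_toReal ((measurable_measure_prodMk_left hS).aemeasurable)
      (Filter.Eventually.of_forall fun p => (measure_lt_top ν _))]
    exact integral_congr_ae (Filter.Eventually.of_forall fun p => by simp only [h1 p])
  have hr : ∫ q, (μ (Set.Ioi q.1 ×ˢ Set.Ioi q.2)).toReal ∂ν
      = (∫⁻ q, μ ((fun p => (p, q)) ⁻¹' S) ∂ν).toReal := by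
    rw [← integral_toReal ((measurable_measure_prodMk_right hS).aemeasurable)
      (Filter.Eventually.of_forall fun q => (measure_lt_top μ _))]
    exact integral_congr_ae (Filter.Eventually.of_forall fun q => by simp only [h2 q])
  rw [hl, hr, ← Measure.prod_apply hS, ← Measure.prod_apply_symm hS]

end Aux

/-- If `F_θ` and `F_0` are continuous joint cdf's with the same continuous marginals
`G` and `H`, and `F_0 = G·H` (independent coordinates under `μ_0`), then
`E_{μ_θ}[F_0(X,Y)] = E_{μ_0}[F_θ(X,Y)]`. -/
theorem stmt6 (μθ μ0 : Measure (ℝ × ℝ)) [IsProbabilityMeasure μθ] [IsProbabilityMeasure μ0]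
    (G H : ℝ → ℝ) (hGc : Continuous G) (hHc : Continuous H)
    (Fθ F0 : ℝ × ℝ → ℝ)
    (hFθ : ∀ p, Fθ p = jointCDF μθ p) (hFθc : Continuous Fθ)
    (hF0 : ∀ p, F0 p = jointCDF μ0 p) (hF0c : Continuous F0)
    (hGθ : ∀ x : ℝ, (μθ (Set.Iic x ×ˢ (Set.univ : Set ℝ))).toReal = G x)
    (hHθ : ∀ y : ℝ, (μθ ((Set.univ : Set ℝ) ×ˢ Set.Iic y)).toReal = H y)
    (hG0 : ∀ x : ℝ, (μ0 (Set.Iic x ×ˢ (Set.univ : Set ℝ))).toReal = G x)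
    (hH0 : ∀ y : ℝ, (μ0 ((Set.univ : Set ℝ) ×ˢ Set.Iic y)).toReal = H y)
    (hprod : ∀ p : ℝ × ℝ, F0 p = G p.1 * H p.2) :
    ∫ p, F0 p ∂μθ = ∫ p, Fθ p ∂μ0 := by
  -- null lines
  have hlθx := line_null_fst μθ G hGc hGθ
  have hlθy := line_null_snd μθ H hHc hHθ
  have hl0x := line_null_fst μ0 G hGc hG0
  have hl0y := line_null_snd μ0 H hHc hH0
  -- integrability of the building blocks
  have hGbd : ∀ x, 0 ≤ G x ∧ G x ≤ 1 := by
    intro x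
    rw [← hG0 x]
    exact ⟨ENNReal.toReal_nonneg, by
      have := prob_le_one (μ := μ0) (s := Set.Iic x ×ˢ (Set.univ : Set ℝ))
      simpa using ENNReal.toReal_mono ENNReal.one_ne_top this⟩
  have hHbd : ∀ y, 0 ≤ H y ∧ H y ≤ 1 := by
    intro y
    rw [← hH0 y]
    exact ⟨ENNReal.toReal_nonneg, by
      have := prob_le_one (μ := μ0) (s := (Set.univ : Set ℝ) ×ˢ Set.Iic y)
      simpa using ENNReal.toReal_mono ENNReal.one_ne_top this⟩
  have intG : ∀ (μ : Measure (ℝ × ℝ)) [IsProbabilityMeasure μ], Integrable (fun p : ℝ × ℝ => G p.1) μ := by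
    intro μ _
    refine (integrable_const (1 : ℝ)).mono' ((hGc.comp continuous_fst).aestronglyMeasurable) ?_
    filter_upwards with p
    rw [Real.norm_eq_abs, abs_of_nonneg (hGbd p.1).1]
    exact (hGbd p.1).2
  have intH : ∀ (μ : Measure (ℝ × ℝ)) [IsProbabilityMeasure μ], Integrable (fun p : ℝ × ℝ => H p.2) μ := by
    intro μ _
    refine (integrable_const (1 : ℝ)).mono' ((hHc.comp continuous_snd).aestronglyMeasurable) ?_
    filter_upwards with p
    rw [Real.norm_eq_abs, abs_of_nonneg (hHbd p.2).1]
    exact (hHbd p.2).2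
  have cdf_bd : ∀ (ν : Measure (ℝ × ℝ)) [IsProbabilityMeasure ν] (F : ℝ × ℝ → ℝ),
      (∀ p, F p = jointCDF ν p) → ∀ p : ℝ × ℝ, 0 ≤ F p ∧ F p ≤ 1 := by
    intro ν _ F hF p
    rw [hF p]; unfold jointCDF
    exact ⟨ENNReal.toReal_nonneg, by
      have := prob_le_one (μ := ν) (s := Set.Iic p.1 ×ˢ Set.Iic p.2)
      simpa using ENNReal.toReal_mono ENNReal.one_ne_top this⟩
  have intF : ∀ (μ ν : Measure (ℝ × ℝ)) [IsProbabilityMeasure μ] [IsProbabilityMeasure ν]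
      (F : ℝ × ℝ → ℝ), Continuous F → (∀ p, F p = jointCDF ν p) → Integrable F μ := by
    intro μ ν _ _ F hFc hF
    refine (integrable_const (1 : ℝ)).mono' hFc.aestronglyMeasurable ?_
    filter_upwards with p
    rw [Real.norm_eq_abs, abs_of_nonneg (cdf_bd ν F hF p).1]
    exact (cdf_bd ν F hF p).2
  -- marginal integrals agree
  have hmapG : μθ.map Prod.fst = μ0.map Prod.fst := by
    apply Measure.ext_of_Iic
    intro a
    rw [Measure.map_apply measurable_fst measurableSet_Iic,
      Measure.map_apply measurable_fst measurableSet_Iic]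
    have h1 : (Prod.fst ⁻¹' Set.Iic a : Set (ℝ × ℝ)) = Set.Iic a ×ˢ Set.univ := by
      ext ⟨u, v⟩; simp
    rw [h1]
    have := (hGθ a).trans (hG0 a).symm
    exact (ENNReal.toReal_eq_toReal_iff' (measure_ne_top _ _) (measure_ne_top _ _)).mp this
  have hmapH : μθ.map Prod.snd = μ0.map Prod.snd := by
    apply Measure.ext_of_Iic
    intro a
    rw [Measure.map_apply measurable_snd measurableSet_Iic,
      Measure.map_apply measurable_snd measurableSet_Iic]
    have h1 : (Prod.snd ⁻¹' Set.Iic a : Set (ℝ × ℝ)) = Set.univ ×ˢ Set.Iic a := by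
      ext ⟨u, v⟩; simp
    rw [h1]
    have := (hHθ a).trans (hH0 a).symm
    exact (ENNReal.toReal_eq_toReal_iff' (measure_ne_top _ _) (measure_ne_top _ _)).mp this
  have hGint : ∫ p, G p.1 ∂μθ = ∫ p, G p.1 ∂μ0 := by
    have h1 : ∫ p, G p.1 ∂μθ = ∫ x, G x ∂(μθ.map Prod.fst) :=
      (integral_map measurable_fst.aemeasurable hGc.aestronglyMeasurable).symm
    have h2 : ∫ p, G p.1 ∂μ0 = ∫ x, G x ∂(μ0.map Prod.fst) :=
      (integral_map measurable_fst.aemeasurable hGc.aestronglyMeasurable).symm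
    rw [h1, h2, hmapG]
  have hHint : ∫ p, H p.2 ∂μθ = ∫ p, H p.2 ∂μ0 := by
    have h1 : ∫ p, H p.2 ∂μθ = ∫ y, H y ∂(μθ.map Prod.snd) :=
      (integral_map measurable_snd.aemeasurable hHc.aestronglyMeasurable).symm
    have h2 : ∫ p, H p.2 ∂μ0 = ∫ y, H y ∂(μ0.map Prod.snd) :=
      (integral_map measurable_snd.aemeasurable hHc.aestronglyMeasurable).symm
    rw [h1, h2, hmapH]
  -- main exchanged-integral identities
  have key : ∀ (μ ν : Measure (ℝ × ℝ)) [IsProbabilityMeasure μ] [IsProbabilityMeasure ν]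
      (Fν Fμ : ℝ × ℝ → ℝ), (∀ p, Fν p = jointCDF ν p) → (∀ p, Fμ p = jointCDF μ p) →
      (∀ x : ℝ, ν ({x} ×ˢ (Set.univ : Set ℝ)) = 0) →
      (∀ y : ℝ, ν ((Set.univ : Set ℝ) ×ˢ {y}) = 0) →
      (∀ x : ℝ, (μ (Set.Iic x ×ˢ (Set.univ : Set ℝ))).toReal = G x) →
      (∀ y : ℝ, (μ ((Set.univ : Set ℝ) ×ˢ Set.Iic y)).toReal = H y) →
      Integrable Fμ ν → Integrable (fun p : ℝ × ℝ => G p.1) ν →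
      Integrable (fun p : ℝ × ℝ => H p.2) ν →
      ∫ p, Fν p ∂μ = ∫ q, Fμ q ∂ν + (1 - ∫ q, G q.1 ∂ν - ∫ q, H q.2 ∂ν) := by
    intro μ ν _ _ Fν Fμ hFν hFμ hνx hνy hGμ hHμ hintF hintG hintH
    have step1 : ∫ p, Fν p ∂μ = ∫ p, (ν (Set.Iio p.1 ×ˢ Set.Iio p.2)).toReal ∂μ := by
      apply integral_congr_ae
      filter_upwards with p
      rw [hFν p]; unfold jointCDF
      rw [Iic_eq_Iio ν hνx hνy p.1 p.2]
    have step2 := fubini_step μ ν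
    have step3 : ∫ q, (μ (Set.Ioi q.1 ×ˢ Set.Ioi q.2)).toReal ∂ν
        = ∫ q, (1 - G q.1 - H q.2 + Fμ q) ∂ν := by
      apply integral_congr_ae
      filter_upwards with q
      rw [quadrant_toReal μ G H (fun _ => 0) Fμ hGμ hHμ (fun p => hFμ p) q.1 q.2]
    have step4 : ∫ q, (1 - G q.1 - H q.2 + Fμ q) ∂ν
        = ∫ q, Fμ q ∂ν + (1 - ∫ q, G q.1 ∂ν - ∫ q, H q.2 ∂ν) := by
      have hA : Integrable (fun q : ℝ × ℝ => (1 : ℝ) - G q.1 - H q.2) ν := by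
        exact ((integrable_const 1).sub hintG).sub hintH
      have hB : Integrable (fun q : ℝ × ℝ => (1 : ℝ) - G q.1) ν := by
        exact (integrable_const 1).sub hintG
      have e1 : ∫ q, ((1 - G q.1 - H q.2) + Fμ q) ∂ν
          = (∫ q, (1 - G q.1 - H q.2) ∂ν) + ∫ q, Fμ q ∂ν := integral_add hA hintF
      have e2 : ∫ q, ((1 : ℝ) - G q.1 - H q.2) ∂ν
          = (∫ q, ((1 : ℝ) - G q.1) ∂ν) - ∫ q, H q.2 ∂ν := integral_sub hB hintH
      have e3 : ∫ q, ((1 : ℝ) - G q.1) ∂ν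
          = (∫ _q : ℝ × ℝ, (1 : ℝ) ∂ν) - ∫ q, G q.1 ∂ν := integral_sub (integrable_const 1) hintG
      have e4 : (∫ _q : ℝ × ℝ, (1 : ℝ) ∂ν) = 1 := by simp
      rw [e1, e2, e3, e4]; ring
    rw [step1, step2, step3, step4]
  have eq1 := key μθ μ0 F0 Fθ hF0 hFθ hl0x hl0y hGθ hHθ
    (intF μ0 μθ Fθ hFθc hFθ) (intG μ0) (intH μ0)
  have eq2 := key μ0 μθ Fθ F0 hFθ hF0 hlθx hlθy hG0 hH0
    (intF μθ μ0 F0 hF0c hF0) (intG μθ) (intH μθ)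
  -- the correction constants agree and hence vanish
  set c : ℝ := 1 - ∫ q, G q.1 ∂μ0 - ∫ q, H q.2 ∂μ0 with hc
  have eq2' : ∫ p, Fθ p ∂μ0 = ∫ q, F0 q ∂μθ + c := by
    rw [eq2, hc, hGint, hHint]
  linarith [eq1, eq2']
end

section
/- For each real θ > -1 and u, v in [0,1], the Plackett function C_{P;θ}(u,v) := 2(θ+1)uv / (1 + θ(u+v) + sqrt(1 + 2θ(u+v-2uv) + θ²(u-v)²)) satisfies the quadratic equation C - uv = θ·(u - C)·(v - C), where C = C_{P;θ}(u,v); moreover the expression under the square root, 1 + 2θ(u+v-2uv) + θ²(u-v)², is nonnegative. -/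
/-- The Plackett copula. -/
noncomputable def plackett (θ u v : ℝ) : ℝ :=
  2 * (θ + 1) * u * v /
    (1 + θ * (u + v) + Real.sqrt (1 + 2 * θ * (u + v - 2 * u * v) + θ^2 * (u - v)^2))

/-!
Clearing denominators, `C - uv = θ (u - C)(v - C)` is the quadratic
`θ C² - (1 + θ(u+v)) C + (1+θ) uv = 0`, whose discriminant is the radicand `D`.
The Plackett function is its root `(1 + θ(u+v) - √D) / (2θ)` written in the rationalized form
`2c / (-b + √D)`, which remains a root when `θ = 0`. The two expressions
`D = (1 + θ(u+v))² - 4θ(1+θ)uv = (1 + θ(u-v))² + 4θ v(1-u)` show `D ≥ 0` according to the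
sign of `θ`, and the first one shows the denominator is positive.
-/

theorem quadratic_eq_zero_of_discrim_eq_mul_self {K : Type*} [CommRing K] [NoZeroDivisors K]
    {a b c s x : K} (h : discrim a b c = s * s) (hd : -b + s ≠ 0) (hx : x * (-b + s) = 2 * c) :
    a * (x * x) + b * x + c = 0 := by
  have key : (-b + s) ^ 2 * (a * (x * x) + b * x + c) = 0 := by
    rw [discrim] at h
    linear_combination (a * x * (-b + s) + 2 * a * c + b * (-b + s)) * hx - c * h
  simpa [hd] using key

theorem add_sqrt_sq_add_pos {b c : ℝ} (hc : 0 < c) : 0 < b + √(b ^ 2 + c) := by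
  have : |b| < √(b ^ 2 + c) := by
    rw [← Real.sqrt_sq_eq_abs]
    exact Real.sqrt_lt_sqrt (sq_nonneg b) (by linarith)
  linarith [neg_abs_le b]

section Radicand

variable {θ u v : ℝ}

theorem plackett_radicand_eq_sq_sub :
    1 + 2 * θ * (u + v - 2 * u * v) + θ ^ 2 * (u - v) ^ 2
      = (1 + θ * (u + v)) ^ 2 + (-4 * θ * (θ + 1) * u * v) := by
  ring

theorem plackett_radicand_eq_sq_add :
    1 + 2 * θ * (u + v - 2 * u * v) + θ ^ 2 * (u - v) ^ 2
      = (1 + θ * (u - v)) ^ 2 + 4 * θ * v * (1 - u) := by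
  ring

variable (hθ : -1 < θ) (hu : u ∈ Set.Icc (0 : ℝ) 1) (hv : v ∈ Set.Icc (0 : ℝ) 1)
include hθ hu hv

theorem plackett_radicand_nonneg :
    0 ≤ 1 + 2 * θ * (u + v - 2 * u * v) + θ ^ 2 * (u - v) ^ 2 := by
  obtain ⟨hu0, hu1⟩ := hu
  obtain ⟨hv0, hv1⟩ := hv
  rcases le_total θ 0 with hθ0 | hθ0
  · rw [plackett_radicand_eq_sq_sub]
    have : 0 ≤ -4 * θ * (θ + 1) * u * v := by
      have := mul_nonneg (mul_nonneg (neg_nonneg.2 hθ0) (by linarith : (0 : ℝ) ≤ θ + 1)) hu0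
      nlinarith [mul_nonneg this hv0]
    positivity
  · rw [plackett_radicand_eq_sq_add]
    have : 0 ≤ 4 * θ * v * (1 - u) := by
      have := mul_nonneg hθ0 hv0
      nlinarith [mul_nonneg this (by linarith : (0 : ℝ) ≤ 1 - u)]
    positivity

theorem plackett_denom_pos :
    0 < 1 + θ * (u + v) + √(1 + 2 * θ * (u + v - 2 * u * v) + θ ^ 2 * (u - v) ^ 2) := by
  obtain ⟨hu0, hu1⟩ := hu
  obtain ⟨hv0, hv1⟩ := hv
  rcases lt_or_ge 0 (1 + θ * (u + v)) with hb | hb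
  · positivity
  · have hθ0 : θ < 0 := by nlinarith
    have hu' : 0 < u := by nlinarith
    have hv' : 0 < v := by nlinarith
    rw [plackett_radicand_eq_sq_sub]
    refine add_sqrt_sq_add_pos ?_
    have := mul_pos (mul_pos (neg_pos.2 hθ0) (by linarith : (0 : ℝ) < θ + 1)) hu'
    nlinarith [mul_pos this hv']

end Radicand

/-- For `θ > -1` and `u, v ∈ [0,1]`, the radicand `1 + 2θ(u+v-2uv) + θ²(u-v)²` is
nonnegative and `C = C_{P;θ}(u,v)` solves the Plackett quadratic equation
`C - uv = θ·(u - C)·(v - C)`. -/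
theorem stmt9 (θ u v : ℝ) (hθ : -1 < θ) (hu : u ∈ Set.Icc (0:ℝ) 1)
    (hv : v ∈ Set.Icc (0:ℝ) 1) :
    0 ≤ 1 + 2 * θ * (u + v - 2 * u * v) + θ^2 * (u - v)^2
    ∧ plackett θ u v - u * v = θ * (u - plackett θ u v) * (v - plackett θ u v) := by
  have hD := plackett_radicand_nonneg hθ hu hv
  have hdenom := plackett_denom_pos hθ hu hv
  refine ⟨hD, ?_⟩
  have hroot := quadratic_eq_zero_of_discrim_eq_mul_self
    (a := θ) (b := -(1 + θ * (u + v))) (c := (θ + 1) * u * v) (x := plackett θ u v)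
    (by rw [discrim, Real.mul_self_sqrt hD]; ring)
    (by rw [neg_neg]; exact hdenom.ne')
    (by rw [neg_neg, plackett, div_mul_cancel₀ _ hdenom.ne']; ring)
  linear_combination -hroot
end

section
/- For each real θ > -1 and u, v in [0,1], the Plackett function C_{P;θ}(u,v) satisfies the Fréchet bounds: max(0, u + v - 1) ≤ C_{P;θ}(u,v) ≤ min(u, v). -/
set_option maxHeartbeats 1000000 in
/-- Fréchet bounds for the Plackett copula: for `θ > -1` and `u, v ∈ [0,1]`,
`max(0, u + v - 1) ≤ C_{P;θ}(u,v) ≤ min(u, v)`. -/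
theorem stmt10 (θ u v : ℝ) (hθ : -1 < θ) (hu : u ∈ Set.Icc (0:ℝ) 1)
    (hv : v ∈ Set.Icc (0:ℝ) 1) :
    max 0 (u + v - 1) ≤ plackett θ u v ∧ plackett θ u v ≤ min u v := by
  obtain ⟨hu0, hu1⟩ := hu
  obtain ⟨hv0, hv1⟩ := hv
  have hθ1 : (0:ℝ) ≤ θ + 1 := by linarith
  -- degenerate cases u = 0 or v = 0
  rcases eq_or_lt_of_le hu0 with h | hu'
  · have h0 : plackett θ u v = 0 := by simp [plackett, ← h]
    rw [h0]
    constructor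
    · exact max_le le_rfl (by linarith)
    · exact le_min hu0 hv0
  rcases eq_or_lt_of_le hv0 with h | hv'
  · have h0 : plackett θ u v = 0 := by simp [plackett, ← h]
    rw [h0]
    constructor
    · exact max_le le_rfl (by linarith)
    · exact le_min hu0 hv0
  -- main case: 0 < u, 0 < v
  set s := Real.sqrt (1 + 2 * θ * (u + v - 2 * u * v) + θ^2 * (u - v)^2) with hsdef
  have hR : 0 ≤ 1 + 2 * θ * (u + v - 2 * u * v) + θ^2 * (u - v)^2 := by
    rcases le_or_gt 0 θ with h | h
    · nlinarith [sq_nonneg (u - v), mul_nonneg (mul_nonneg h hu0) (by linarith : (0:ℝ) ≤ 1 - v),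
        mul_nonneg (mul_nonneg h hv0) (by linarith : (0:ℝ) ≤ 1 - u)]
    · nlinarith [sq_nonneg (1 + θ * (u + v)),
        mul_nonneg (mul_nonneg (by linarith : (0:ℝ) ≤ -θ) hθ1) (mul_nonneg hu0 hv0)]
  have hs : s ^ 2 = 1 + 2 * θ * (u + v - 2 * u * v) + θ^2 * (u - v)^2 := Real.sq_sqrt hR
  have hs0 : 0 ≤ s := Real.sqrt_nonneg _
  have hden : 0 < 1 + θ * (u + v) + s := by
    rcases le_or_gt 0 θ with h | h
    · nlinarith [mul_nonneg h (by linarith : (0:ℝ) ≤ u + v)]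
    · nlinarith [hs, mul_pos (mul_pos (by linarith : (0:ℝ) < -θ) (by linarith : (0:ℝ) < θ + 1))
        (mul_pos hu' hv')]
  have hC : plackett θ u v = 2 * (θ + 1) * u * v / (1 + θ * (u + v) + s) := rfl
  rw [hC]
  constructor
  · -- lower bound
    apply max_le
    · apply div_nonneg _ hden.le
      nlinarith [mul_nonneg hu0 hv0]
    · rcases le_or_gt (u + v) 1 with h | h
      · have : (0:ℝ) ≤ 2 * (θ + 1) * u * v / (1 + θ * (u + v) + s) :=
          div_nonneg (by nlinarith [mul_nonneg hu0 hv0]) hden.le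
        linarith
      · rw [le_div_iff₀ hden]
        have hA : 0 ≤ u * (1 - u) + v * (1 - v) := by
          nlinarith [mul_nonneg hu0 (by linarith : (0:ℝ) ≤ 1 - u),
            mul_nonneg hv0 (by linarith : (0:ℝ) ≤ 1 - v)]
        have hNS : 0 ≤ 2 * (θ + 1) * u * v - (u + v - 1) * (1 + θ * (u + v)) := by
          nlinarith [sq_nonneg (1 - u - v), mul_nonneg hθ1 hA]
        have h4 : 0 ≤ 4 * (θ + 1)^2 * (u * v) * ((1 - u) * (1 - v)) := by
          apply mul_nonneg (mul_nonneg (by positivity) (mul_nonneg hu0 hv0))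
          exact mul_nonneg (by linarith) (by linarith)
        have hid : (2 * (θ + 1) * u * v - (u + v - 1) * (1 + θ * (u + v)))^2
            - ((u + v - 1) * s)^2 = 4 * (θ + 1)^2 * (u * v) * ((1 - u) * (1 - v)) := by
          linear_combination (-(u + v - 1)^2) * hs
        have hws : (u + v - 1) * s ≤ 2 * (θ + 1) * u * v - (u + v - 1) * (1 + θ * (u + v)) := by
          nlinarith [mul_nonneg (by linarith : (0:ℝ) ≤ u + v - 1) hs0]
        have hsplit : (u + v - 1) * (1 + θ * (u + v) + s)
            = (u + v - 1) * (1 + θ * (u + v)) + (u + v - 1) * s := by ring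
        linarith [hws]
  · -- upper bounds
    have key : ∀ a b : ℝ, 0 ≤ a → a ≤ 1 → 0 < b → b ≤ 1 →
        s ^ 2 - (θ * (b - a) + 2 * b - 1) ^ 2 = 4 * (1 + θ) * b * (1 - b) →
        2 * (θ + 1) * a * b / (1 + θ * (a + b) + s) ≤ a := by
      intro a b ha0 ha1 hb0' hb1 hSq
      have hb0 : 0 ≤ b := hb0'.le
      have hx2 : (θ * (b - a) + 2 * b - 1) ^ 2 ≤ s ^ 2 := by
        nlinarith [mul_nonneg (mul_nonneg hθ1 hb0) (by linarith : (0:ℝ) ≤ 1 - b)]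
      have hxb : θ * (b - a) + 2 * b - 1 ≤ s :=
        le_of_pow_le_pow_left₀ two_ne_zero hs0 hx2
      have hden' : 0 < 1 + θ * (a + b) + s := by
        nlinarith [hxb, mul_pos (by linarith : (0:ℝ) < θ + 1) hb0']
      rw [div_le_iff₀ hden']
      nlinarith [mul_nonneg ha0 (sub_nonneg.2 hxb)]
    apply le_min
    · have := key u v hu0 hu1 hv' hv1 (by linear_combination hs)
      rw [show 1 + θ * (u + v) + s = 1 + θ * (u + v) + s from rfl]
      exact this
    · have := key v u hv0 hv1 hu' hu1 (by linear_combination hs)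
      calc 2 * (θ + 1) * u * v / (1 + θ * (u + v) + s)
          = 2 * (θ + 1) * v * u / (1 + θ * (v + u) + s) := by ring_nf
        _ ≤ v := this
end

section
/- For fixed u, v in [0,1], the derivative of the Plackett function θ ↦ C_{P;θ}(u,v) at θ = 0 is d/dθ C_{P;θ}(u,v)|_{θ=0} = u·v·(1-u)·(1-v). -/
/-- The derivative of the Plackett copula in `θ` at `θ = 0` is `u·v·(1-u)·(1-v)`. -/
theorem stmt11 (u v : ℝ) (hu : u ∈ Set.Icc (0:ℝ) 1) (hv : v ∈ Set.Icc (0:ℝ) 1) :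
    HasDerivAt (fun θ : ℝ => plackett θ u v) (u * v * (1 - u) * (1 - v)) 0 := by
  -- inner polynomial g
  have hA : HasDerivAt (fun θ : ℝ => 2 * θ * (u + v - 2 * u * v))
      (2 * (u + v - 2 * u * v)) 0 := by
    simpa using ((hasDerivAt_id (0:ℝ)).const_mul 2).mul_const (u + v - 2 * u * v)
  have hB : HasDerivAt (fun θ : ℝ => θ ^ 2 * (u - v) ^ 2) 0 0 := by
    simpa using (hasDerivAt_pow 2 (0:ℝ)).mul_const ((u - v) ^ 2)
  have hg : HasDerivAt (fun θ : ℝ => 1 + 2 * θ * (u + v - 2 * u * v) + θ ^ 2 * (u - v) ^ 2)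
      (2 * (u + v - 2 * u * v)) 0 := by
    simpa [Pi.add_def] using ((hasDerivAt_const (0:ℝ) (1:ℝ)).add hA).add hB
  have hg0 : (fun θ : ℝ => 1 + 2 * θ * (u + v - 2 * u * v) + θ ^ 2 * (u - v) ^ 2) 0 = 1 := by
    norm_num
  have hs : HasDerivAt
      (fun θ : ℝ => Real.sqrt (1 + 2 * θ * (u + v - 2 * u * v) + θ ^ 2 * (u - v) ^ 2))
      (2 * (u + v - 2 * u * v) / (2 * Real.sqrt 1)) 0 := by
    have := hg.sqrt (by norm_num)
    simpa [hg0] using this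
  have hs' : HasDerivAt
      (fun θ : ℝ => Real.sqrt (1 + 2 * θ * (u + v - 2 * u * v) + θ ^ 2 * (u - v) ^ 2))
      (u + v - 2 * u * v) 0 := by
    simpa [Real.sqrt_one] using hs
  have hlin : HasDerivAt (fun θ : ℝ => θ * (u + v)) (u + v) 0 := by
    simpa using (hasDerivAt_id (0:ℝ)).mul_const (u + v)
  have hD : HasDerivAt
      (fun θ : ℝ => 1 + θ * (u + v) +
        Real.sqrt (1 + 2 * θ * (u + v - 2 * u * v) + θ ^ 2 * (u - v) ^ 2))
      ((u + v) + (u + v - 2 * u * v)) 0 := by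
    simpa [Pi.add_def] using ((hasDerivAt_const (0:ℝ) (1:ℝ)).add hlin).add hs'
  have hN : HasDerivAt (fun θ : ℝ => 2 * (θ + 1) * u * v) (2 * u * v) 0 := by
    have : HasDerivAt (fun θ : ℝ => θ + 1) 1 0 := by
      simpa using (hasDerivAt_id (0:ℝ)).add_const 1
    simpa [mul_comm, mul_assoc, mul_left_comm] using ((this.const_mul 2).mul_const u).mul_const v
  have hD0 : (1 : ℝ) + 0 * (u + v) +
      Real.sqrt (1 + 2 * 0 * (u + v - 2 * u * v) + 0 ^ 2 * (u - v) ^ 2) = 2 := by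
    norm_num
  have hq := hN.div hD (by norm_num)
  have : HasDerivAt (fun θ : ℝ => plackett θ u v)
      ((2 * u * v * (1 + 0 * (u + v) +
          Real.sqrt (1 + 2 * 0 * (u + v - 2 * u * v) + 0 ^ 2 * (u - v) ^ 2)) -
        2 * (0 + 1) * u * v * ((u + v) + (u + v - 2 * u * v))) /
        (1 + 0 * (u + v) +
          Real.sqrt (1 + 2 * 0 * (u + v - 2 * u * v) + 0 ^ 2 * (u - v) ^ 2)) ^ 2) 0 := by
    simpa [plackett, Pi.div_def] using hq
  convert this using 1
  rw [hD0]
  ring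
end
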